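/- Let Φ be a root system in ℝ³ all of whose roots are unit vectors, and let G ⊂ Cl(3)_even be the group generated by all products αβ of pairs of roots α, β ∈ Φ under the Clifford product. Then G is closed under reversion and contains -1 (provided Φ contains two non-parallel roots), and therefore the set of elements of G, viewed as vectors in the 4-dimensional even subalgebra with inner product (R₁,R₂) = ½(R₁R̃₂ + R₂R̃₁), is a root system in ℝ⁴. -/

import Mathlib

/-!
In `Cl(ℝ³)` with pseudoscalar `ω = e₀e₁e₂`, which is central with `ω² = -1`, the product of two
vectors is `uv = u ⬝ v + ω (u × v)`; hence every element of `G` has the quaternionic form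
`r + ω v`. A unit-root product `g` acts on `ℝ³` by `α ↦ g α g̃`, and since `α β α` is minus the
reflection of `β` in `α`, this action permutes the finite set `Φ`. Two elements with the same
action differ by some `x ∈ G` commuting with the spanning set `Φ`, hence with all of `ℝ³`; for
`x = r + ω v` this forces `v × w = 0` for every `w`, so `x = r` with `r² = x x̃ = 1`. Thus
`g ↦ (α ↦ g α g̃)` has finite image and fibres `{g, -g}`, and `G` is finite.
-/

open CliffordAlgebra

open Matrix in
theorem eq_zero_of_forall_cross_eq_zero {R : Type*} [CommRing R] {v : Fin 3 → R}
    (h : ∀ w, w ⨯₃ v = 0) : v = 0 := by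
  have h₀ := congrFun (h (Pi.single 0 1))
  have h₁ := congrFun (h (Pi.single 1 1))
  have h₂ := congrFun (h (Pi.single 2 1))
  ext i
  fin_cases i
  · simpa [cross_apply] using h₁ 2
  · simpa [cross_apply] using h₂ 0
  · simpa [cross_apply] using h₀ 1

namespace CliffordAlgebra

open Matrix QuadraticMap

section SpinorMonoid

variable {R M : Type*} [CommRing R] [AddCommGroup M] [Module R M] {Q : QuadraticForm R M}
  {Φ : Set M}

variable (Q Φ) in
def spinorMonoid : Submonoid (CliffordAlgebra Q) :=
  Submonoid.closure {x | ∃ α ∈ Φ, ∃ β ∈ Φ, x = ι Q α * ι Q β}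

theorem ι_mul_ι_mem_spinorMonoid {α β : M} (hα : α ∈ Φ) (hβ : β ∈ Φ) :
    ι Q α * ι Q β ∈ spinorMonoid Q Φ :=
  Submonoid.subset_closure ⟨α, hα, β, hβ, rfl⟩

theorem reverse_mem_spinorMonoid {g : CliffordAlgebra Q} (hg : g ∈ spinorMonoid Q Φ) :
    reverse g ∈ spinorMonoid Q Φ := by
  induction hg using Submonoid.closure_induction with
  | mem x hx =>
    obtain ⟨α, hα, β, hβ, rfl⟩ := hx
    simpa only [reverse.map_mul, reverse_ι] using ι_mul_ι_mem_spinorMonoid hβ hα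
  | one => simpa only [reverse.map_one] using one_mem _
  | mul x y _ _ hx hy => simpa only [reverse.map_mul] using mul_mem hy hx

section UnitRoots

variable (hunit : ∀ α ∈ Φ, Q α = 1)
include hunit

theorem ι_mul_self_of_mem {α : M} (hα : α ∈ Φ) : ι Q α * ι Q α = 1 := by
  rw [ι_sq_scalar, hunit α hα, map_one]

theorem mul_reverse_of_mem_spinorMonoid {g : CliffordAlgebra Q} (hg : g ∈ spinorMonoid Q Φ) :
    g * reverse g = 1 := by
  induction hg using Submonoid.closure_induction with
  | mem x hx =>
    obtain ⟨α, hα, β, hβ, rfl⟩ := hx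
    rw [reverse.map_mul, reverse_ι, reverse_ι, mul_assoc, ← mul_assoc (ι Q β),
      ι_mul_self_of_mem hunit hβ, one_mul, ι_mul_self_of_mem hunit hα]
  | one => rw [reverse.map_one, one_mul]
  | mul x y _ _ hx hy =>
    rw [reverse.map_mul, mul_assoc, ← mul_assoc y, hy, one_mul, hx]

theorem reverse_mul_of_mem_spinorMonoid {g : CliffordAlgebra Q} (hg : g ∈ spinorMonoid Q Φ) :
    reverse g * g = 1 := by
  simpa only [reverse_reverse] using
    mul_reverse_of_mem_spinorMonoid hunit (reverse_mem_spinorMonoid hg)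

theorem neg_one_mem_spinorMonoid {α : M} (hα : α ∈ Φ) (hnα : -α ∈ Φ) :
    (-1 : CliffordAlgebra Q) ∈ spinorMonoid Q Φ := by
  simpa only [map_neg, mul_neg, ι_mul_self_of_mem hunit hα] using
    ι_mul_ι_mem_spinorMonoid (Q := Q) hα hnα

theorem exists_mul_ι_mul_reverse_eq_ι
    (hrefl : ∀ α ∈ Φ, ∀ x ∈ Φ, polar Q α x • α - x ∈ Φ)
    {g : CliffordAlgebra Q} (hg : g ∈ spinorMonoid Q Φ) {α : M} (hα : α ∈ Φ) :
    ∃ β ∈ Φ, g * ι Q α * reverse g = ι Q β := by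
  have sandwich : ∀ a ∈ Φ, ∀ x, ι Q a * ι Q x * ι Q a = ι Q (polar Q a x • a - x) :=
    fun a ha x => by rw [ι_mul_ι_mul_ι, hunit a ha, one_smul]
  induction hg using Submonoid.closure_induction_left generalizing α with
  | one => exact ⟨α, hα, by rw [reverse.map_one, one_mul, mul_one]⟩
  | mul_left x hx y _ ih =>
    obtain ⟨a, ha, b, hb, rfl⟩ := hx
    obtain ⟨γ, hγ, hyγ⟩ := ih hα
    refine ⟨_, hrefl a ha _ (hrefl b hb γ hγ), ?_⟩
    calc ι Q a * ι Q b * y * ι Q α * reverse (ι Q a * ι Q b * y)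
        = ι Q a * (ι Q b * (y * ι Q α * reverse y) * ι Q b) * ι Q a := by
          simp only [reverse.map_mul, reverse_ι, mul_assoc]
      _ = _ := by rw [hyγ, sandwich b hb γ, sandwich a ha]

end UnitRoots

end SpinorMonoid

section Euclidean3

variable {R : Type*} [CommRing R] {Q : QuadraticForm R (Fin 3 → R)} (hQ : ∀ v, Q v = v ⬝ᵥ v)

theorem ι_eq_sum_smul_ι_single (v : Fin 3 → R) :
    ι Q v = v 0 • ι Q (Pi.single 0 1) + v 1 • ι Q (Pi.single 1 1) + v 2 • ι Q (Pi.single 2 1) := by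
  simp only [← map_smul, ← map_add]
  congr 1
  ext i
  fin_cases i <;> simp

variable (Q) in
def pseudoscalar : CliffordAlgebra Q :=
  ι Q (Pi.single 0 1) * ι Q (Pi.single 1 1) * ι Q (Pi.single 2 1)

include hQ

theorem polar_eq_two_mul_dotProduct (u v : Fin 3 → R) :
    polar Q u v = 2 * (u ⬝ᵥ v) := by
  simp only [QuadraticMap.polar, hQ, add_dotProduct, dotProduct_add, dotProduct_comm v u]
  ring

theorem ι_single_mul_self (i : Fin 3) : ι Q (Pi.single i 1) * ι Q (Pi.single i 1) = 1 := by
  simp [ι_sq_scalar, hQ]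

theorem ι_single_mul_ι_single_mul_self (i : Fin 3) (x : CliffordAlgebra Q) :
    ι Q (Pi.single i 1) * (ι Q (Pi.single i 1) * x) = x := by
  rw [← mul_assoc, ι_single_mul_self hQ, one_mul]

theorem ι_single_mul_ι_single_of_lt {i j : Fin 3} (h : j < i) :
    ι Q (Pi.single i 1) * ι Q (Pi.single j 1) = -(ι Q (Pi.single j 1) * ι Q (Pi.single i 1)) := by
  rw [ι_mul_ι_comm, polar_eq_two_mul_dotProduct hQ]
  simp [h.ne']

theorem ι_single_mul_ι_single_mul_of_lt {i j : Fin 3} (h : j < i) (x : CliffordAlgebra Q) :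
    ι Q (Pi.single i 1) * (ι Q (Pi.single j 1) * x) =
      -(ι Q (Pi.single j 1) * (ι Q (Pi.single i 1) * x)) := by
  rw [← mul_assoc, ι_single_mul_ι_single_of_lt hQ h, neg_mul, mul_assoc]

-- With `mul_assoc`, the `_mul_self` and `_of_lt` rules above sort every word in the `eᵢ` into
-- normal form, so `simp` decides the identities below.
theorem ι_mul_ι_eq (u v : Fin 3 → R) :
    ι Q u * ι Q v = algebraMap R _ (u ⬝ᵥ v) + pseudoscalar Q * ι Q (u ⨯₃ v) := by
  rw [ι_eq_sum_smul_ι_single u, ι_eq_sum_smul_ι_single v, ι_eq_sum_smul_ι_single (u ⨯₃ v),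
    pseudoscalar]
  simp only [add_mul, mul_add, mul_smul_comm, smul_mul_assoc, mul_assoc, mul_neg, smul_neg,
    ι_single_mul_self hQ, ι_single_mul_ι_single_mul_self hQ, ι_single_mul_ι_single_of_lt hQ,
    ι_single_mul_ι_single_mul_of_lt hQ, Fin.reduceLT, cross_apply, cons_val_zero, cons_val_one,
    cons_val, neg_neg, mul_one, dotProduct,
    Fin.sum_univ_three, Algebra.algebraMap_eq_smul_one]
  module

theorem ι_mul_pseudoscalar (v : Fin 3 → R) : ι Q v * pseudoscalar Q = pseudoscalar Q * ι Q v := by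
  rw [ι_eq_sum_smul_ι_single v, pseudoscalar]
  simp only [add_mul, mul_add, mul_smul_comm, smul_mul_assoc, mul_assoc, mul_neg, smul_neg,
    ι_single_mul_self hQ, ι_single_mul_ι_single_mul_self hQ, ι_single_mul_ι_single_of_lt hQ,
    ι_single_mul_ι_single_mul_of_lt hQ, Fin.reduceLT, neg_neg, mul_one]

theorem pseudoscalar_mul_self : pseudoscalar Q * pseudoscalar Q = -1 := by
  simp only [pseudoscalar, mul_assoc, mul_neg, ι_single_mul_self hQ,
    ι_single_mul_ι_single_mul_of_lt hQ, Fin.reduceLT, neg_neg, mul_one]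

theorem algebraMap_add_pseudoscalar_mul_ι_mul (r s : R) (v w : Fin 3 → R) :
    (algebraMap R _ r + pseudoscalar Q * ι Q v) * (algebraMap R _ s + pseudoscalar Q * ι Q w) =
      algebraMap R _ (r * s - v ⬝ᵥ w) + pseudoscalar Q * ι Q (r • w + s • v - v ⨯₃ w) := by
  have bivector_mul : pseudoscalar Q * ι Q v * (pseudoscalar Q * ι Q w) =
      -(algebraMap R _ (v ⬝ᵥ w) + pseudoscalar Q * ι Q (v ⨯₃ w)) := by
    rw [mul_assoc, ← mul_assoc (ι Q v), ι_mul_pseudoscalar hQ, mul_assoc, ← mul_assoc,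
      pseudoscalar_mul_self hQ, ι_mul_ι_eq hQ, neg_one_mul]
  rw [add_mul, mul_add, mul_add, bivector_mul, ← map_mul, ← Algebra.smul_def,
    ← Algebra.commutes, ← Algebra.smul_def]
  simp only [map_sub, map_add, map_smul, mul_sub, mul_add, mul_smul_comm]
  module

theorem exists_eq_algebraMap_add_pseudoscalar_mul_ι {Φ : Set (Fin 3 → R)}
    {g : CliffordAlgebra Q} (hg : g ∈ spinorMonoid Q Φ) :
    ∃ (r : R) (v : Fin 3 → R), g = algebraMap R _ r + pseudoscalar Q * ι Q v := by
  induction hg using Submonoid.closure_induction with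
  | mem x hx =>
    obtain ⟨α, -, β, -, rfl⟩ := hx
    exact ⟨_, _, ι_mul_ι_eq hQ α β⟩
  | one => exact ⟨1, 0, by rw [map_one, map_zero, mul_zero, add_zero]⟩
  | mul x y _ _ hx hy =>
    obtain ⟨r, v, rfl⟩ := hx
    obtain ⟨s, w, rfl⟩ := hy
    exact ⟨_, _, algebraMap_add_pseudoscalar_mul_ι_mul hQ r s v w⟩

end Euclidean3

section OrderedField

variable {K : Type*} [Field K] [LinearOrder K] [IsStrictOrderedRing K]
  {Q : QuadraticForm K (Fin 3 → K)} (hQ : ∀ v, Q v = v ⬝ᵥ v)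
include hQ

theorem eq_zero_of_ι_eq_zero {v : Fin 3 → K} (h : ι Q v = 0) : v = 0 := by
  have : algebraMap K (CliffordAlgebra Q) (v ⬝ᵥ v) = 0 := by
    rw [← hQ, ← ι_sq_scalar, h, zero_mul]
  exact dotProduct_self_eq_zero.mp ((map_eq_zero_iff _ (algebraMap K _).injective).mp this)

theorem eq_zero_of_forall_commute_algebraMap_add_pseudoscalar_mul_ι {r : K} {v : Fin 3 → K}
    (h : ∀ w, Commute (ι Q w) (algebraMap K _ r + pseudoscalar Q * ι Q v)) : v = 0 := by
  have cancel_pseudoscalar : ∀ y z : CliffordAlgebra Q,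
      pseudoscalar Q * y = pseudoscalar Q * z → y = z := fun y z hyz => by
    simpa [← mul_assoc, pseudoscalar_mul_self hQ] using congrArg (pseudoscalar Q * ·) hyz
  refine eq_zero_of_forall_cross_eq_zero fun w => ?_
  have hbivector : Commute (ι Q w) (pseudoscalar Q * ι Q v) := by
    simpa using (h w).sub_right (Algebra.commute_algebraMap_right r (ι Q w))
  have hvw : ι Q w * ι Q v = ι Q v * ι Q w := cancel_pseudoscalar _ _ <| by
    rw [← mul_assoc, ← ι_mul_pseudoscalar hQ, mul_assoc, hbivector.eq, mul_assoc]
  rw [ι_mul_ι_eq hQ, ι_mul_ι_eq hQ, dotProduct_comm] at hvw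
  have hcross : ι Q (w ⨯₃ v - v ⨯₃ w) = 0 := by
    rw [map_sub, cancel_pseudoscalar _ _ (add_left_cancel hvw), sub_self]
  rw [← self_eq_neg, cross_anticomm, ← sub_eq_zero]
  exact eq_zero_of_ι_eq_zero hQ hcross

theorem eq_one_or_eq_neg_one_of_forall_commute {Φ : Set (Fin 3 → K)}
    (hunit : ∀ α ∈ Φ, Q α = 1) {g : CliffordAlgebra Q} (hg : g ∈ spinorMonoid Q Φ)
    (h : ∀ w, Commute (ι Q w) g) : g = 1 ∨ g = -1 := by
  obtain ⟨r, v, rfl⟩ := exists_eq_algebraMap_add_pseudoscalar_mul_ι hQ hg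
  obtain rfl := eq_zero_of_forall_commute_algebraMap_add_pseudoscalar_mul_ι hQ h
  have hnorm := mul_reverse_of_mem_spinorMonoid hunit hg
  rw [map_zero, mul_zero, add_zero] at hnorm ⊢
  rw [reverse.commutes, ← map_mul, ← map_one (algebraMap K _)] at hnorm
  rcases mul_self_eq_one_iff.mp ((algebraMap K _).injective hnorm) with rfl | rfl
  · exact Or.inl (map_one _)
  · exact Or.inr (by rw [map_neg, map_one])

variable {Φ : Set (Fin 3 → K)} (hspan : Submodule.span K Φ = ⊤) (hunit : ∀ α ∈ Φ, Q α = 1)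
include hspan hunit

theorem eq_or_eq_neg_of_forall_conj_eq {g g' : CliffordAlgebra Q} (hg : g ∈ spinorMonoid Q Φ)
    (hg' : g' ∈ spinorMonoid Q Φ)
    (h : ∀ α ∈ Φ, g' * ι Q α * reverse g' = g * ι Q α * reverse g) : g' = g ∨ g' = -g := by
  set x := reverse g' * g with hx
  have hxG : x ∈ spinorMonoid Q Φ := mul_mem (reverse_mem_spinorMonoid hg') hg
  have hfix : ∀ α ∈ Φ, x * ι Q α * reverse x = ι Q α := fun α hα => by
    calc x * ι Q α * reverse x = reverse g' * (g * ι Q α * reverse g) * g' := by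
          simp only [hx, reverse.map_mul, reverse_reverse, mul_assoc]
      _ = (reverse g' * g') * ι Q α * (reverse g' * g') := by
          rw [← h α hα]; simp only [mul_assoc]
      _ = ι Q α := by rw [reverse_mul_of_mem_spinorMonoid hunit hg', one_mul, mul_one]
  have hcentral : Submodule.span K Φ ≤ (Subalgebra.centralizer K {x}).toSubmodule.comap (ι Q) := by
    refine Submodule.span_le.mpr fun α hα => (Subalgebra.mem_centralizer_iff K).mpr ?_
    rintro _ rfl
    calc x * ι Q α = x * ι Q α * (reverse x * x) := by
          rw [reverse_mul_of_mem_spinorMonoid hunit hxG, mul_one]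
      _ = ι Q α * x := by rw [← mul_assoc, hfix α hα]
  have hcomm (w : Fin 3 → K) : Commute (ι Q w) x :=
    ((Subalgebra.mem_centralizer_iff K).mp (hcentral (hspan ▸ Submodule.mem_top)) x rfl).symm
  have hg'x : g' * x = g := by
    rw [hx, ← mul_assoc, mul_reverse_of_mem_spinorMonoid hunit hg', one_mul]
  rcases eq_one_or_eq_neg_one_of_forall_commute hQ hunit hxG hcomm with h1 | h1
  · left; rwa [h1, mul_one] at hg'x
  · right; rw [← hg'x, h1, mul_neg_one, neg_neg]

theorem spinorMonoid_finite (hfin : Φ.Finite)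
    (hrefl : ∀ α ∈ Φ, ∀ x ∈ Φ, polar Q α x • α - x ∈ Φ) :
    (spinorMonoid Q Φ : Set (CliffordAlgebra Q)).Finite := by
  have : Finite Φ := hfin.to_subtype
  let conj (g : CliffordAlgebra Q) (α : Φ) : CliffordAlgebra Q := g * ι Q α * reverse g
  refine Set.Finite.of_finite_fibers conj ?_ ?_
  · refine (Set.Finite.pi (t := fun _ : Φ => ι Q '' Φ) fun _ => hfin.image _).subset ?_
    rintro _ ⟨g, hg, rfl⟩ α -
    obtain ⟨β, hβ, hgβ⟩ := exists_mul_ι_mul_reverse_eq_ι hunit hrefl hg α.2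
    exact ⟨β, hβ, hgβ.symm⟩
  · rintro _ ⟨g, hg, rfl⟩
    refine (Set.toFinite {g, -g}).subset fun g' ⟨hg', hconj⟩ => ?_
    exact eq_or_eq_neg_of_forall_conj_eq hQ hspan hunit hg hg' fun α hα => congrFun hconj ⟨α, hα⟩

end OrderedField

theorem eq_one_or_eq_neg_one_of_smul_mem {K M : Type*} [Field K] [AddCommGroup M] [Module K M]
    {Q : QuadraticForm K M} [Nontrivial (CliffordAlgebra Q)] {Φ : Set M}
    (hunit : ∀ α ∈ Φ, Q α = 1) {g : CliffordAlgebra Q} (hg : g ∈ spinorMonoid Q Φ) {t : K}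
    (htg : t • g ∈ spinorMonoid Q Φ) : t = 1 ∨ t = -1 := by
  have hnorm := mul_reverse_of_mem_spinorMonoid hunit htg
  rw [map_smul, smul_mul_smul_comm, mul_reverse_of_mem_spinorMonoid hunit hg,
    ← Algebra.algebraMap_eq_smul_one, ← map_one (algebraMap K _)] at hnorm
  exact mul_self_eq_one_iff.mp ((algebraMap K _).injective hnorm)

end CliffordAlgebra

theorem spinor_induction_root_system_general
    (Q : QuadraticForm ℝ (Fin 3 → ℝ))
    (hQ : ∀ v : Fin 3 → ℝ, Q v = v 0 ^ 2 + v 1 ^ 2 + v 2 ^ 2)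
    (Φ : Set (Fin 3 → ℝ)) (hfin : Φ.Finite)
    (hspan : Submodule.span ℝ Φ = ⊤)
    (hunit : ∀ α ∈ Φ, α 0 ^ 2 + α 1 ^ 2 + α 2 ^ 2 = 1)
    (hneg : ∀ α ∈ Φ, -α ∈ Φ)
    (hrefl : ∀ α ∈ Φ, ∀ x ∈ Φ,
      x - (2 * (x 0 * α 0 + x 1 * α 1 + x 2 * α 2)) • α ∈ Φ)
    (hnp : ∃ α ∈ Φ, ∃ β ∈ Φ, ∀ t : ℝ, β ≠ t • α) :
    let G : Submonoid (CliffordAlgebra Q) :=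
      Submonoid.closure {x | ∃ α ∈ Φ, ∃ β ∈ Φ, x = ι Q α * ι Q β}
    (∀ g ∈ G, reverse g ∈ G) ∧
    (-1 : CliffordAlgebra Q) ∈ G ∧
    (G : Set (CliffordAlgebra Q)).Finite ∧
    (∀ R ∈ G, -R ∈ G) ∧
    (∀ R ∈ G, ∀ t : ℝ, t • R ∈ G → t = 1 ∨ t = -1) ∧
    (∀ R₁ ∈ G, ∀ R₂ ∈ G, -(R₁ * reverse R₂ * R₁) ∈ G) := by
  intro G
  have hQ' (v : Fin 3 → ℝ) : Q v = dotProduct v v := by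
    simp [hQ, dotProduct, Fin.sum_univ_three, sq]
  have hunit' (α : Fin 3 → ℝ) (hα : α ∈ Φ) : Q α = 1 := (hQ α).trans (hunit α hα)
  have hrefl' : ∀ α ∈ Φ, ∀ x ∈ Φ, QuadraticMap.polar Q α x • α - x ∈ Φ := fun α hα x hx => by
    convert hneg _ (hrefl α hα x hx) using 1
    simp only [polar_eq_two_mul_dotProduct hQ', neg_sub, dotProduct, Fin.sum_univ_three]
    ring_nf
  obtain ⟨α, hα, -⟩ := hnp
  have hneg_one : (-1 : CliffordAlgebra Q) ∈ G := neg_one_mem_spinorMonoid hunit' hα (hneg α hα)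
  have hneg_mem (R) (hR : R ∈ G) : -R ∈ G := by simpa using mul_mem hneg_one hR
  exact ⟨fun g hg => reverse_mem_spinorMonoid hg, hneg_one,
    spinorMonoid_finite hQ' hspan hunit' hfin hrefl', hneg_mem,
    fun R hR t htR => eq_one_or_eq_neg_one_of_smul_mem hunit' hR htR,
    fun R₁ h₁ R₂ h₂ => hneg_mem _ (mul_mem (mul_mem h₁ (reverse_mem_spinorMonoid h₂)) h₁)⟩

/-- Induction theorem: from a 3D root system `Φ` of unit roots, the group `G` of even
products of roots in the Clifford algebra of ℝ³ is closed under reversion, contains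
`-1` (given two non-parallel roots), and — viewed as a set of vectors in the
4-dimensional even subalgebra with inner product `(R₁,R₂) = ½(R₁R̃₂ + R₂R̃₁), with
reflections `R₂ ↦ -R₁R̃₂R₁` — forms a root system in ℝ⁴. -/
theorem spinor_induction_root_system
    (Q : QuadraticForm ℝ (Fin 3 → ℝ))
    (hQ : ∀ v : Fin 3 → ℝ, Q v = v 0 ^ 2 + v 1 ^ 2 + v 2 ^ 2)
    (Φ : Set (Fin 3 → ℝ)) (hfin : Φ.Finite)
    (hspan : Submodule.span ℝ Φ = ⊤)
    (hunit : ∀ α ∈ Φ, α 0 ^ 2 + α 1 ^ 2 + α 2 ^ 2 = 1)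
    (hneg : ∀ α ∈ Φ, -α ∈ Φ)
    (hmult : ∀ α ∈ Φ, ∀ t : ℝ, t • α ∈ Φ → t = 1 ∨ t = -1)
    (hrefl : ∀ α ∈ Φ, ∀ x ∈ Φ,
      x - (2 * (x 0 * α 0 + x 1 * α 1 + x 2 * α 2)) • α ∈ Φ)
    (hnp : ∃ α ∈ Φ, ∃ β ∈ Φ, ∀ t : ℝ, β ≠ t • α) :
    let G : Submonoid (CliffordAlgebra Q) :=
      Submonoid.closure {x | ∃ α ∈ Φ, ∃ β ∈ Φ, x = ι Q α * ι Q β}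
    (∀ g ∈ G, reverse g ∈ G) ∧
    (-1 : CliffordAlgebra Q) ∈ G ∧
    (G : Set (CliffordAlgebra Q)).Finite ∧
    (∀ R ∈ G, -R ∈ G) ∧
    (∀ R ∈ G, ∀ t : ℝ, t • R ∈ G → t = 1 ∨ t = -1) ∧
    (∀ R₁ ∈ G, ∀ R₂ ∈ G, -(R₁ * reverse R₂ * R₁) ∈ G) :=
  spinor_induction_root_system_general Q hQ Φ hfin hspan hunit hneg hrefl hnp
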